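/- arXiv:2511.10135 — 5 statements merged into one kernel-verified Lean document; each statement's English description precedes it below -/
import Mathlib

section
/- Let A and B be countable types, let μ₁ be a subdistribution on A, μ₂ a subdistribution on B, let ε be a real number, let R ⊆ A × B, let f : A → (subdistributions on a countable type A') and g : B → (subdistributions on a countable type B'), let R' ⊆ A' × B', and let Err : B → [0,1]. If there is an (ε,R)-approximate coupling of μ₁ and μ₂, and for every (a,b) ∈ R there is an (Err b, R')-approximate coupling of f a and g b, then there is an (ε + ε', R')-approximate coupling of the monadic bind μ₁ ≫= f and μ₂ ≫= g, where ε' = E_{μ₂}[Err] = ∑' b, μ₂ b * Err b. -/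
/-- `μ` is a subdistribution on a countable type: nonnegative, summable, total mass ≤ 1. -/
def IsSubDistr {A : Type*} [Countable A] (μ : A → ℝ) : Prop :=
  (∀ a, 0 ≤ μ a) ∧ Summable μ ∧ ∑' a, μ a ≤ 1

/-- Expectation of `X` with respect to `μ`. -/
noncomputable def expect {A : Type*} [Countable A] (μ X : A → ℝ) : ℝ :=
  ∑' a, μ a * X a

/-- Monadic bind of subdistributions. -/
noncomputable def sdBind {A B : Type*} [Countable A] [Countable B]
    (μ : A → ℝ) (f : A → B → ℝ) : B → ℝ :=
  fun b => ∑' a, μ a * f a b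

/-- Dirac (return) subdistribution. -/
def sdRet {A : Type*} [DecidableEq A] (a : A) : A → ℝ :=
  fun a' => if a' = a then 1 else 0

/-- The uniform subdistribution on `{0, …, N}`. -/
noncomputable def unifd (N : ℕ) : ℕ → ℝ :=
  fun n => if n ≤ N then 1 / (N + 1) else 0

/-- An `(ε, R)`-approximate coupling of `μ₁` and `μ₂` exists. -/
def ARCoupl {A B : Type*} [Countable A] [Countable B]
    (μ₁ : A → ℝ) (μ₂ : B → ℝ) (ε : ℝ) (R : Set (A × B)) : Prop :=
  ∀ X : A → ℝ, ∀ Y : B → ℝ,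
    (∀ a, 0 ≤ X a ∧ X a ≤ 1) → (∀ b, 0 ≤ Y b ∧ Y b ≤ 1) →
    (∀ a b, (a, b) ∈ R → X a ≤ Y b) →
    expect μ₁ X ≤ expect μ₂ Y + ε
-- expectation bounds
lemma expect_nonneg {A : Type*} [Countable A] {μ X : A → ℝ}
    (hμ : ∀ a, 0 ≤ μ a) (hX : ∀ a, 0 ≤ X a) : 0 ≤ expect μ X :=
  tsum_nonneg fun a => mul_nonneg (hμ a) (hX a)

lemma summable_mul_of_le_one {A : Type*} [Countable A] {μ X : A → ℝ}
    (hμ : IsSubDistr μ) (hX : ∀ a, 0 ≤ X a ∧ X a ≤ 1) : Summable (fun a => μ a * X a) := by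
  refine Summable.of_nonneg_of_le (fun a => mul_nonneg (hμ.1 a) (hX a).1)
    (fun a => ?_) hμ.2.1
  calc μ a * X a ≤ μ a * 1 := mul_le_mul_of_nonneg_left (hX a).2 (hμ.1 a)
  _ = μ a := mul_one _

lemma expect_le_one {A : Type*} [Countable A] {μ X : A → ℝ}
    (hμ : IsSubDistr μ) (hX : ∀ a, 0 ≤ X a ∧ X a ≤ 1) : expect μ X ≤ 1 := by
  refine le_trans (Summable.tsum_le_tsum (fun a => ?_) (summable_mul_of_le_one hμ hX) hμ.2.1) hμ.2.2
  calc μ a * X a ≤ μ a * 1 := mul_le_mul_of_nonneg_left (hX a).2 (hμ.1 a)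
  _ = μ a := mul_one _

lemma expect_bind {A B : Type*} [Countable A] [Countable B]
    {μ : A → ℝ} {f : A → B → ℝ} {X : B → ℝ}
    (hμ : IsSubDistr μ) (hf : ∀ a, IsSubDistr (f a)) (hX : ∀ b, 0 ≤ X b ∧ X b ≤ 1) :
    expect (sdBind μ f) X = expect μ (fun a => expect (f a) X) := by
  have hsum : Summable (Function.uncurry fun a b => μ a * (f a b * X b)) := by
    have : Function.uncurry (fun a b => μ a * (f a b * X b))
        = fun p : A × B => μ p.1 * (f p.1 p.2 * X p.2) := rfl
    rw [this, summable_prod_of_nonneg (fun p => mul_nonneg (hμ.1 _)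
      (mul_nonneg ((hf p.1).1 _) (hX p.2).1))]
    constructor
    · intro a
      exact (summable_mul_of_le_one (hf a) hX).mul_left (μ a)
    · refine Summable.of_nonneg_of_le (fun a => tsum_nonneg fun b => mul_nonneg (hμ.1 _)
        (mul_nonneg ((hf a).1 _) (hX b).1)) (fun a => ?_) hμ.2.1
      simp only [Function.uncurry]
      rw [tsum_mul_left]
      calc μ a * ∑' b, f a b * X b ≤ μ a * 1 :=
            mul_le_mul_of_nonneg_left (expect_le_one (hf a) hX) (hμ.1 a)
        _ = μ a := mul_one _
  unfold expect sdBind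
  calc ∑' b, (∑' a, μ a * f a b) * X b
      = ∑' b, ∑' a, μ a * (f a b * X b) := by
        congr 1; ext b; rw [← tsum_mul_right]; congr 1; ext a; ring
    _ = ∑' a, ∑' b, μ a * (f a b * X b) := Summable.tsum_comm hsum
    _ = ∑' a, μ a * ∑' b, f a b * X b := by
        congr 1; ext a; rw [tsum_mul_left]

theorem arcoupl_bind_right_err {A B A' B' : Type*}
    [Countable A] [Countable B] [Countable A'] [Countable B']
    (μ₁ : A → ℝ) (μ₂ : B → ℝ) (ε : ℝ) (R : Set (A × B))
    (f : A → A' → ℝ) (g : B → B' → ℝ) (R' : Set (A' × B')) (Err : B → ℝ)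
    (hμ₁ : IsSubDistr μ₁) (hμ₂ : IsSubDistr μ₂)
    (hf : ∀ a, IsSubDistr (f a)) (hg : ∀ b, IsSubDistr (g b))
    (hErr : ∀ b, 0 ≤ Err b ∧ Err b ≤ 1)
    (hR : ARCoupl μ₁ μ₂ ε R)
    (hfg : ∀ a b, (a, b) ∈ R → ARCoupl (f a) (g b) (Err b) R') :
    ARCoupl (sdBind μ₁ f) (sdBind μ₂ g) (ε + expect μ₂ Err) R' := by
  intro X Y hX hY hXY
  set X₁ : A → ℝ := fun a => expect (f a) X with hX₁def
  set Y₁ : B → ℝ := fun b => min (expect (g b) Y + Err b) 1 with hY₁def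
  have hX₁ : ∀ a, 0 ≤ X₁ a ∧ X₁ a ≤ 1 := fun a =>
    ⟨expect_nonneg (hf a).1 (fun b => (hX b).1), expect_le_one (hf a) hX⟩
  have hY₁ : ∀ b, 0 ≤ Y₁ b ∧ Y₁ b ≤ 1 := fun b =>
    ⟨le_min (add_nonneg (expect_nonneg (hg b).1 fun b' => (hY b').1) (hErr b).1)
      zero_le_one, min_le_right _ _⟩
  have hXY₁ : ∀ a b, (a, b) ∈ R → X₁ a ≤ Y₁ b := fun a b hab =>
    le_min (hfg a b hab X Y hX hY hXY) (hX₁ a).2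
  have key := hR X₁ Y₁ hX₁ hY₁ hXY₁
  rw [expect_bind hμ₁ hf hX, expect_bind hμ₂ hg hY]
  have hsum1 : Summable (fun b => μ₂ b * expect (g b) Y) :=
    summable_mul_of_le_one hμ₂ fun b =>
      ⟨expect_nonneg (hg b).1 fun b' => (hY b').1, expect_le_one (hg b) hY⟩
  have hsum2 : Summable (fun b => μ₂ b * Err b) := summable_mul_of_le_one hμ₂ hErr
  have hmono : expect μ₂ Y₁ ≤ expect μ₂ (fun b => expect (g b) Y) + expect μ₂ Err := by
    have : expect μ₂ Y₁ ≤ ∑' b, (μ₂ b * expect (g b) Y + μ₂ b * Err b) := by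
      refine Summable.tsum_le_tsum (fun b => ?_) (summable_mul_of_le_one hμ₂ hY₁)
        (hsum1.add hsum2)
      rw [← mul_add]
      exact mul_le_mul_of_nonneg_left (min_le_left _ _) (hμ₂.1 b)
    rw [Summable.tsum_add hsum1 hsum2] at this
    exact this
  calc expect μ₁ X₁ ≤ expect μ₂ Y₁ + ε := key
    _ ≤ expect μ₂ (fun b => expect (g b) Y) + expect μ₂ Err + ε := by linarith
    _ = expect μ₂ (fun b => expect (g b) Y) + (ε + expect μ₂ Err) := by ring
end

section
/- Let A be a countable type, μ₁ and μ₂ subdistributions on A, and ε ≥ 0 a real number. If there is an (ε, Eq)-approximate coupling of μ₁ and μ₂, where Eq = {(a,a) | a ∈ A} is the equality relation, then μ₁ a ≤ μ₂ a + ε for every a ∈ A. -/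
theorem expect_sdRet {A : Type*} [Countable A] [DecidableEq A] (μ : A → ℝ) (a : A) :
    expect μ (sdRet a) = μ a := by
  simp only [expect, sdRet, mul_ite, mul_one, mul_zero]
  exact tsum_ite_eq a μ

theorem sdRet_mem_Icc {A : Type*} [DecidableEq A] (a a' : A) :
    sdRet a a' ∈ Set.Icc (0 : ℝ) 1 := by
  unfold sdRet
  split_ifs <;> norm_num

theorem ARCoupl.expect_le_of_diag {A : Type*} [Countable A] {μ₁ μ₂ : A → ℝ} {ε : ℝ}
    (h : ARCoupl μ₁ μ₂ ε {p : A × A | p.1 = p.2}) (X : A → ℝ) (hX : ∀ a, X a ∈ Set.Icc (0 : ℝ) 1) :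
    expect μ₁ X ≤ expect μ₂ X + ε :=
  h X X hX hX fun _ _ hab => (congrArg X hab).le

theorem arcoupl_eq_pointwise_general {A : Type*} [Countable A]
    (μ₁ μ₂ : A → ℝ) (ε : ℝ)
    (hR : ARCoupl μ₁ μ₂ ε {p : A × A | p.1 = p.2}) :
    ∀ a, μ₁ a ≤ μ₂ a + ε := by
  classical
  intro a
  simpa only [expect_sdRet] using hR.expect_le_of_diag (sdRet a) (sdRet_mem_Icc a)

theorem arcoupl_eq_pointwise {A : Type*} [Countable A]
    (μ₁ μ₂ : A → ℝ) (ε : ℝ)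
    (hμ₁ : IsSubDistr μ₁) (hμ₂ : IsSubDistr μ₂) (hε : 0 ≤ ε)
    (hR : ARCoupl μ₁ μ₂ ε {p : A × A | p.1 = p.2}) :
    ∀ a, μ₁ a ≤ μ₂ a + ε :=
  arcoupl_eq_pointwise_general μ₁ μ₂ ε hR
end

section
/- Let A, B, C be countable types, μ₁, μ₂, μ₃ subdistributions on A, B, C respectively, ε, ε' real numbers, R ⊆ A × B and S ⊆ B × C. If there is an (ε,R)-approximate coupling of μ₁ and μ₂ and an (ε',S)-approximate coupling of μ₂ and μ₃, then there is an (ε+ε', S∘R)-approximate coupling of μ₁ and μ₃, where S∘R = {(a,c) | ∃ b, (a,b) ∈ R ∧ (b,c) ∈ S}. -/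
theorem arcoupl_comp {A B C : Type*} [Countable A] [Countable B] [Countable C]
    (μ₁ : A → ℝ) (μ₂ : B → ℝ) (μ₃ : C → ℝ) (ε ε' : ℝ)
    (R : Set (A × B)) (S : Set (B × C))
    (hμ₁ : IsSubDistr μ₁) (hμ₂ : IsSubDistr μ₂) (hμ₃ : IsSubDistr μ₃)
    (hR : ARCoupl μ₁ μ₂ ε R) (hS : ARCoupl μ₂ μ₃ ε' S) :
    ARCoupl μ₁ μ₃ (ε + ε')
      {p : A × C | ∃ b, (p.1, b) ∈ R ∧ (b, p.2) ∈ S} := by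
  intro X Z hX hZ hXZ
  set Y : B → ℝ := fun b => sInf (insert 1 (Z '' {c | (b, c) ∈ S})) with hYdef
  have hne : ∀ b : B, (insert 1 (Z '' {c | (b, c) ∈ S})).Nonempty :=
    fun b => ⟨1, Set.mem_insert _ _⟩
  have hbdd : ∀ b : B, BddBelow (insert 1 (Z '' {c | (b, c) ∈ S})) := by
    intro b
    refine ⟨0, ?_⟩
    rintro x (rfl | ⟨c, _, rfl⟩)
    · exact zero_le_one
    · exact (hZ c).1
  have hY : ∀ b, 0 ≤ Y b ∧ Y b ≤ 1 := by
    intro b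
    constructor
    · apply le_csInf (hne b)
      rintro x (rfl | ⟨c, _, rfl⟩)
      · exact zero_le_one
      · exact (hZ c).1
    · exact csInf_le (hbdd b) (Set.mem_insert _ _)
  have hXY : ∀ a b, (a, b) ∈ R → X a ≤ Y b := by
    intro a b hab
    apply le_csInf (hne b)
    rintro x (rfl | ⟨c, hc, rfl⟩)
    · exact (hX a).2
    · exact hXZ a c ⟨b, hab, hc⟩
  have hYZ : ∀ b c, (b, c) ∈ S → Y b ≤ Z c := by
    intro b c hbc
    exact csInf_le (hbdd b) (Set.mem_insert_of_mem _ ⟨c, hbc, rfl⟩)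
  have h1 := hR X Y hX hY hXY
  have h2 := hS Y Z hY hZ hYZ
  linarith
end

section
/- Let N be a natural number and let f : ℕ → ℕ restrict to a bijection of {0,…,N} onto itself. Then there is a (0,R)-approximate coupling of the uniform subdistribution unifd N with itself, where R = {(n, f n) | n ≤ N}. -/
theorem arcoupl_unifd_bij (N : ℕ) (f : ℕ → ℕ)
    (hf : Set.BijOn f {n | n ≤ N} {n | n ≤ N}) :
    ARCoupl (unifd N) (unifd N) 0
      {p : ℕ × ℕ | p.1 ≤ N ∧ p.2 = f p.1} := by
  intro X Y hX hY hR
  have key : ∀ g : ℕ → ℝ,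
      expect (unifd N) g = ∑ n ∈ Finset.range (N+1), (1/(N+1:ℝ)) * g n := by
    intro g
    unfold expect unifd
    rw [tsum_eq_sum (s := Finset.range (N+1))]
    · refine Finset.sum_congr rfl fun n hn => ?_
      rw [Finset.mem_range, Nat.lt_succ_iff] at hn
      simp [hn]
    · intro n hn
      rw [Finset.mem_range, Nat.lt_succ_iff] at hn
      simp [hn]
  rw [key X, key Y, add_zero]
  have hc : (0:ℝ) ≤ 1/(N+1:ℝ) := by positivity
  calc ∑ n ∈ Finset.range (N+1), (1/(N+1:ℝ)) * X n
      ≤ ∑ n ∈ Finset.range (N+1), (1/(N+1:ℝ)) * Y (f n) := by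
        refine Finset.sum_le_sum fun n hn => ?_
        rw [Finset.mem_range, Nat.lt_succ_iff] at hn
        exact mul_le_mul_of_nonneg_left (hR n (f n) ⟨hn, rfl⟩) hc
    _ = ∑ n ∈ Finset.range (N+1), (1/(N+1:ℝ)) * Y n := by
        refine Finset.sum_bij (fun n _ => f n) ?_ ?_ ?_ ?_
        · intro a ha
          rw [Finset.mem_range, Nat.lt_succ_iff] at ha ⊢
          exact hf.mapsTo ha
        · intro a ha b hb h
          rw [Finset.mem_range, Nat.lt_succ_iff] at ha hb
          exact hf.injOn ha hb h
        · intro b hb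
          rw [Finset.mem_range, Nat.lt_succ_iff] at hb
          obtain ⟨a, ha, hab⟩ := hf.surjOn hb
          exact ⟨a, by simpa [Finset.mem_range, Nat.lt_succ_iff] using ha, hab⟩
        · intro a _; rfl
end

section
/- Let N and M be natural numbers with M ≤ N, and let f : ℕ → ℕ be a function that is injective on {0,…,M} and maps {0,…,M} into {0,…,N}. Then there is an (ε,R)-approximate coupling of unifd N with unifd M, where ε = (N − M)/(N+1) and R = {(n,m) | m ≤ M ∧ n = f m}. -/
theorem arcoupl_unifd_inj_err (N M : ℕ) (hMN : M ≤ N) (f : ℕ → ℕ)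
    (hinj : Set.InjOn f {m | m ≤ M})
    (hmaps : Set.MapsTo f {m | m ≤ M} {n | n ≤ N}) :
    ARCoupl (unifd N) (unifd M) (((N : ℝ) - M) / (N + 1))
      {p : ℕ × ℕ | p.2 ≤ M ∧ p.1 = f p.2} := by
  intro X Y hX hY hXY
  have hN1 : (0:ℝ) < (N:ℝ) + 1 := by positivity
  have hM1 : (0:ℝ) < (M:ℝ) + 1 := by positivity
  have hexp : ∀ (K : ℕ) (Z : ℕ → ℝ),
      expect (unifd K) Z = (∑ n ∈ Finset.range (K+1), Z n) / (K+1) := by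
    intro K Z
    rw [expect, tsum_eq_sum (s := Finset.range (K+1))]
    · rw [Finset.sum_div]
      refine Finset.sum_congr rfl fun n hn => ?_
      rw [Finset.mem_range] at hn
      have : n ≤ K := by omega
      simp [unifd, this]
      ring
    · intro n hn
      rw [Finset.mem_range] at hn
      have : ¬ n ≤ K := by omega
      simp [unifd, this]
  rw [hexp, hexp]
  set S := (Finset.range (M+1)).image f with hS
  have hinj' : ∀ a ∈ Finset.range (M+1), ∀ b ∈ Finset.range (M+1), f a = f b → a = b := by
    intro a ha b hb
    exact hinj (by simpa [Nat.lt_succ_iff] using ha) (by simpa [Nat.lt_succ_iff] using hb)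
  have hScard : S.card = M+1 := by
    rw [hS, Finset.card_image_of_injOn, Finset.card_range]
    intro a ha b hb
    exact hinj' a ha b hb
  have hSsub : S ⊆ Finset.range (N+1) := by
    intro n hn
    rw [hS, Finset.mem_image] at hn
    obtain ⟨m, hm, rfl⟩ := hn
    rw [Finset.mem_range] at hm ⊢
    exact Nat.lt_succ_of_le (hmaps (Nat.lt_succ_iff.mp hm))
  have hYnn : (0:ℝ) ≤ ∑ m ∈ Finset.range (M+1), Y m :=
    Finset.sum_nonneg fun m _ => (hY m).1
  have key : ∑ n ∈ Finset.range (N+1), X n ≤ (∑ m ∈ Finset.range (M+1), Y m) + ((N:ℝ) - M) := by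
    rw [← Finset.sum_sdiff hSsub]
    have h1 : ∑ n ∈ S, X n ≤ ∑ m ∈ Finset.range (M+1), Y m := by
      rw [hS, Finset.sum_image hinj']
      refine Finset.sum_le_sum fun m hm => ?_
      exact hXY _ m ⟨Nat.lt_succ_iff.mp (Finset.mem_range.mp hm), rfl⟩
    have h2 : ∑ n ∈ Finset.range (N+1) \ S, X n ≤ ((N:ℝ) - M) := by
      calc ∑ n ∈ Finset.range (N+1) \ S, X n ≤ ∑ _n ∈ Finset.range (N+1) \ S, 1 :=
            Finset.sum_le_sum fun n _ => (hX n).2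
        _ = ((Finset.range (N+1) \ S).card : ℝ) := by simp
        _ = ((N:ℝ) - M) := by
            rw [Finset.card_sdiff_of_subset hSsub, hScard, Finset.card_range]
            have h : (N+1) - (M+1) = N - M := by omega
            rw [h, Nat.cast_sub hMN]
    linarith
  calc (∑ n ∈ Finset.range (N+1), X n) / (N+1)
      ≤ ((∑ m ∈ Finset.range (M+1), Y m) + ((N:ℝ) - M)) / (N+1) := by gcongr
    _ = (∑ m ∈ Finset.range (M+1), Y m) / (N+1) + ((N:ℝ) - M) / (N+1) := by ring
    _ ≤ (∑ m ∈ Finset.range (M+1), Y m) / (M+1) + ((N:ℝ) - M) / (N+1) := by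
        gcongr
end
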